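/- Let γ : Fin T → ℝ be a positive nonincreasing sequence, and let u : Fin T → ℝ be such that for every s, ∑_{t=s}^{T-1} γ(t)·u(t) ≥ 0. Then ∑_{t=0}^{T-1} u(t) ≥ 0. -/

import Mathlib

lemma aux_abel (n : ℕ) (g v : ℕ → ℝ) (hg : ∀ t, 0 < g t)
    (hmono : ∀ i j, i ≤ j → g j ≤ g i)
    (htail : ∀ s, 0 ≤ ∑ t ∈ Finset.Ico s n, g t * v t) :
    ∀ k s, s + k = n →
      0 ≤ ∑ t ∈ Finset.Ico s n, v t ∧
      ∑ t ∈ Finset.Ico s n, g t * v t ≤ g s * ∑ t ∈ Finset.Ico s n, v t := by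
  intro k
  induction k with
  | zero =>
    intro s hs
    simp [← hs]
  | succ k ih =>
    intro s hs
    have hsn : s < n := by omega
    have ih' := ih (s + 1) (by omega)
    obtain ⟨hB, hgv⟩ := ih'
    have hsplit : ∀ f : ℕ → ℝ, ∑ t ∈ Finset.Ico s n, f t
        = f s + ∑ t ∈ Finset.Ico (s + 1) n, f t := fun f =>
      Finset.sum_eq_sum_Ico_succ_bot hsn f
    have key : ∑ t ∈ Finset.Ico s n, g t * v t ≤ g s * ∑ t ∈ Finset.Ico s n, v t := by
      rw [hsplit (fun t => g t * v t), hsplit v, mul_add]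
      have h1 : ∑ t ∈ Finset.Ico (s + 1) n, g t * v t
          ≤ g s * ∑ t ∈ Finset.Ico (s + 1) n, v t := by
        calc ∑ t ∈ Finset.Ico (s + 1) n, g t * v t
            ≤ g (s + 1) * ∑ t ∈ Finset.Ico (s + 1) n, v t := hgv
          _ ≤ g s * ∑ t ∈ Finset.Ico (s + 1) n, v t :=
              mul_le_mul_of_nonneg_right (hmono s (s+1) (by omega)) hB
      linarith
    refine ⟨?_, key⟩
    have := htail s
    nlinarith [hg s]

theorem stmt_10 (T : ℕ) (γ u : Fin T → ℝ)
    (hpos : ∀ t, 0 < γ t) (hanti : Antitone γ)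
    (htail : ∀ s : Fin T, 0 ≤ ∑ t ∈ Finset.Ici s, γ t * u t) :
    0 ≤ ∑ t, u t := by
  rcases Nat.eq_zero_or_pos T with hT | hT
  · subst hT; simp
  have hT1 : T - 1 < T := by omega
  set g : ℕ → ℝ := fun t => γ ⟨min t (T - 1), by omega⟩ with hg
  set v : ℕ → ℝ := fun t => if h : t < T then u ⟨t, h⟩ else 0 with hv
  have hgt : ∀ t, 0 < g t := fun t => hpos _
  have hmono : ∀ i j, i ≤ j → g j ≤ g i := by
    intro i j hij
    exact hanti (by simp [Fin.le_def]; omega)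
  have hcoe : ∀ (s : ℕ) (hs : s < T), ∑ t ∈ Finset.Ico s T, g t * v t
      = ∑ t ∈ Finset.Ici (⟨s, hs⟩ : Fin T), γ t * u t := by
    intro s hs
    have h1 : ∑ t ∈ Finset.Ici (⟨s, hs⟩ : Fin T), γ t * u t
        = ∑ t ∈ Finset.Ici (⟨s, hs⟩ : Fin T), g (Fin.valEmbedding t) * v (Fin.valEmbedding t) := by
      apply Finset.sum_congr rfl
      intro t _
      have htT : (t : ℕ) < T := t.isLt
      simp only [Fin.valEmbedding_apply, hg, hv, dif_pos htT]
      have : (⟨min (t : ℕ) (T - 1), by omega⟩ : Fin T) = t :=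
        Fin.ext (show min (t : ℕ) (T - 1) = (t : ℕ) by omega)
      rw [this]
    rw [h1, ← Finset.sum_map (Finset.Ici (⟨s, hs⟩ : Fin T)) Fin.valEmbedding
      (fun x => g x * v x), Fin.map_valEmbedding_Ici]
  have htail' : ∀ s, 0 ≤ ∑ t ∈ Finset.Ico s T, g t * v t := by
    intro s
    rcases lt_or_ge s T with h | h
    · rw [hcoe s h]; exact htail _
    · rw [Finset.Ico_eq_empty (by omega)]; simp
  have main := (aux_abel T g v hgt hmono htail' T 0 (by omega)).1
  have : ∑ t, u t = ∑ t ∈ Finset.Ico 0 T, v t := by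
    rw [← Finset.range_eq_Ico, ← Fin.sum_univ_eq_sum_range]
    apply Finset.sum_congr rfl
    intro t _
    simp [hv, t.isLt]
  rw [this]
  exact main
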